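/- Let P and Q be nonzero integers with D = P^2 - 4Q ≠ 0 and let V = V(P,Q) be the Lucas sequence of the second kind. Then for every prime p and all integers k, n ≥ 1, p^k divides V_{p^k n} − V_{p^{k-1} n}. -/
import Mathlib


/-- Lucas sequence of the second kind: `V 0 = 2`, `V 1 = P`,
`V (n+2) = P * V (n+1) - Q * V n`. -/
def lucasV (P Q : ℤ) : ℕ → ℤ
  | 0 => 2
  | 1 => P
  | n + 2 => P * lucasV P Q (n + 1) - Q * lucasV P Q n

lemma lucasV_zero (P Q : ℤ) : lucasV P Q 0 = 2 := rfl
lemma lucasV_one (P Q : ℤ) : lucasV P Q 1 = P := rfl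
lemma lucasV_rec (P Q : ℤ) (n : ℕ) :
    lucasV P Q (n + 2) = P * lucasV P Q (n + 1) - Q * lucasV P Q n := rfl

lemma lucasV_add_formula (P Q : ℤ) :
    ∀ b c, lucasV P Q (c + 2 * b) + Q ^ b * lucasV P Q c
      = lucasV P Q (c + b) * lucasV P Q b := by
  intro b
  induction b using Nat.twoStepInduction with
  | zero =>
      intro c; simp [lucasV_zero]; ring
  | one =>
      intro c
      simp only [pow_one, lucasV_one]
      rw [show c + 2 * 1 = c + 2 from rfl, lucasV_rec]
      ring
  | more b ih1 ih2 =>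
      intro c
      have h1 := ih2 (c + 1)
      rw [show c+1+2*(b+1) = c+2*b+3 by ring, show c+1+(b+1) = c+b+2 by ring] at h1
      have h2 := ih1 (c + 2)
      rw [show c+2+2*b = c+2*b+2 by ring, show c+2+b = c+b+2 by ring] at h2
      have h3 := lucasV_rec P Q (c+2*b+2)
      rw [show c+2*b+2+2 = c+2*b+4 by ring, show c+2*b+2+1 = c+2*b+3 by ring] at h3
      have hrecc := lucasV_rec P Q c
      rw [show c+2*(b+2) = c+2*b+4 by ring, show c+(b+2) = c+b+2 by ring, lucasV_rec P Q b]
      linear_combination (P:ℤ) * h1 - Q * h2 + h3 + Q^(b+1) * hrecc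

lemma lucasV_mul (P Q : ℤ) (m : ℕ) :
    ∀ r, lucasV P Q (m * r) = lucasV (lucasV P Q m) (Q ^ m) r := by
  intro r
  induction r using Nat.twoStepInduction with
  | zero => simp [lucasV_zero]
  | one => simp [lucasV_one]
  | more r ih1 ih2 =>
      rw [lucasV_rec, ← ih1, ← ih2]
      have h := lucasV_add_formula P Q m (m * r)
      rw [show m*r + 2*m = m*(r+2) by ring, show m*r + m = m*(r+1) by ring] at h
      linarith [h]

open MvPolynomial Polynomial in
noncomputable def vpoly : ℕ → MvPolynomial (Fin 2) ℤ
  | 0 => 2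
  | 1 => MvPolynomial.X 0
  | n + 2 => MvPolynomial.X 0 * vpoly (n + 1) - MvPolynomial.X 1 * vpoly n

lemma vpoly_rec (n : ℕ) :
    vpoly (n + 2) = MvPolynomial.X 0 * vpoly (n + 1) - MvPolynomial.X 1 * vpoly n := rfl

lemma eval_vpoly (S T : ℤ) : ∀ n, MvPolynomial.eval ![S, T] (vpoly n) = lucasV S T n := by
  intro n
  induction n using Nat.twoStepInduction with
  | zero => simp [vpoly, lucasV_zero]
  | one => simp [vpoly, lucasV_one]
  | more n ih1 ih2 => simp [vpoly_rec, lucasV_rec, ih1, ih2]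

open Polynomial in
lemma map_vpoly_p (p : ℕ) (hp : p.Prime) :
    MvPolynomial.map (Int.castRingHom (ZMod p)) (vpoly p) = MvPolynomial.X 0 ^ p := by
  haveI : Fact p.Prime := ⟨hp⟩
  set R' := MvPolynomial (Fin 2) (ZMod p)
  set f : Polynomial R' := Polynomial.X ^ 2 -
    (Polynomial.C (MvPolynomial.X 0) * Polynomial.X + Polynomial.C (-MvPolynomial.X 1)) with hf
  have hdeg : f.degree ≠ 0 := by
    rw [hf, Polynomial.degree_sub_eq_left_of_degree_lt]
    · simp [Polynomial.degree_X_pow]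
    · refine lt_of_le_of_lt (Polynomial.degree_linear_le) ?_
      rw [Polynomial.degree_X_pow]; decide
  have hinj : Function.Injective (AdjoinRoot.of f) :=
    AdjoinRoot.of.injective_of_degree_ne_zero hdeg
  have hinj' : Function.Injective (algebraMap R' (AdjoinRoot f)) := by
    rw [AdjoinRoot.algebraMap_eq]; exact hinj
  haveI : CharP (AdjoinRoot f) p := charP_of_injective_algebraMap hinj' p
  set r := AdjoinRoot.root f with hr
  set s := AdjoinRoot.of f (MvPolynomial.X 0) with hs
  set t := AdjoinRoot.of f (MvPolynomial.X 1) with ht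
  have hroot : r ^ 2 = s * r - t := by
    have h0 := AdjoinRoot.eval₂_root f
    rw [hf] at h0
    simp only [Polynomial.eval₂_sub, Polynomial.eval₂_pow, Polynomial.eval₂_X,
      Polynomial.eval₂_add, Polynomial.eval₂_mul, Polynomial.eval₂_C, Polynomial.eval₂_neg,
      map_neg] at h0
    rw [hs, ht, ← hr] at *
    linear_combination h0
  set y := s - r with hy
  have hty : t = r * y := by rw [hy]; linear_combination hroot
  have hsy : s = r + y := by rw [hy]; ring
  have key : ∀ n, AdjoinRoot.of f
      (MvPolynomial.map (Int.castRingHom (ZMod p)) (vpoly n)) = r ^ n + y ^ n := by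
    intro n
    induction n using Nat.twoStepInduction with
    | zero =>
        have h2 : vpoly 0 = 2 := rfl
        rw [h2, map_ofNat, map_ofNat]; norm_num
    | one =>
        have h1 : (vpoly 1) = MvPolynomial.X 0 := rfl
        rw [h1, MvPolynomial.map_X, ← hs, hsy]; ring
    | more n ih1 ih2 =>
        rw [vpoly_rec, map_sub, map_mul, map_mul, MvPolynomial.map_X, MvPolynomial.map_X,
          map_sub, map_mul, map_mul, ih1, ih2, ← hs, ← ht]
        rw [hsy, hty]; ring
  have final : AdjoinRoot.of f
      (MvPolynomial.map (Int.castRingHom (ZMod p)) (vpoly p)) =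
      AdjoinRoot.of f (MvPolynomial.X 0 ^ p) := by
    rw [key p, map_pow, ← hs, hsy, add_pow_char]
  exact hinj final

/-- `vpoly p = X0^p + p * G` for some integer polynomial `G`. -/
lemma vpoly_sub_pow (p : ℕ) (hp : p.Prime) :
    ∃ G : MvPolynomial (Fin 2) ℤ, vpoly p = MvPolynomial.X 0 ^ p + MvPolynomial.C (p : ℤ) * G := by
  have h : MvPolynomial.C (p:ℤ) ∣ vpoly p - MvPolynomial.X 0 ^ p := by
    rw [MvPolynomial.C_dvd_iff_dvd_coeff]
    intro i
    have := map_vpoly_p p hp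
    have hz : (MvPolynomial.map (Int.castRingHom (ZMod p)) (vpoly p - MvPolynomial.X 0 ^ p)) = 0 := by
      rw [map_sub, this, map_pow, MvPolynomial.map_X, sub_self]
    have := congrArg (MvPolynomial.coeff i) hz
    rw [MvPolynomial.coeff_map] at this
    simpa using (ZMod.intCast_zmod_eq_zero_iff_dvd _ p).mp this
  obtain ⟨G, hG⟩ := h
  exact ⟨G, by linear_combination hG⟩

/-- Fermat for integers. -/
lemma int_fermat (p : ℕ) (hp : p.Prime) (a : ℤ) : (p : ℤ) ∣ a ^ p - a := by
  haveI : Fact p.Prime := ⟨hp⟩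
  have : ((a ^ p - a : ℤ) : ZMod p) = 0 := by
    push_cast
    rw [ZMod.pow_card]; ring
  exact (ZMod.intCast_zmod_eq_zero_iff_dvd _ p).mp this

/-- lifting: `p^k ∣ a - b → p^(k+1) ∣ a^p - b^p` (k ≥ 1). -/
lemma pow_lift (p : ℕ) (hp : p.Prime) (k : ℕ) (hk : 1 ≤ k) (a b : ℤ)
    (h : (p:ℤ) ^ k ∣ a - b) : (p:ℤ) ^ (k + 1) ∣ a ^ p - b ^ p := by
  haveI : Fact p.Prime := ⟨hp⟩
  have hgeom := geom_sum₂_mul a b p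
  have hp1 : (p:ℤ) ∣ a - b := dvd_trans (dvd_pow_self _ (by omega)) h
  have hsum : (p:ℤ) ∣ ∑ i ∈ Finset.range p, a ^ i * b ^ (p - 1 - i) := by
    rw [← ZMod.intCast_zmod_eq_zero_iff_dvd]
    push_cast
    have hab : ((a : ZMod p)) = (b : ZMod p) := by
      have : ((a - b : ℤ) : ZMod p) = 0 := (ZMod.intCast_zmod_eq_zero_iff_dvd _ p).mpr hp1
      push_cast at this; linear_combination this
    rw [hab]
    have : ∀ i ∈ Finset.range p, ((b:ZMod p)) ^ i * (b:ZMod p) ^ (p - 1 - i) = (b:ZMod p)^(p-1) := by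
      intro i hi
      rw [← pow_add]
      congr 1
      have := Finset.mem_range.mp hi
      omega
    rw [Finset.sum_congr rfl this, Finset.sum_const, Finset.card_range]
    simp [ZMod.natCast_self]
  rw [← hgeom, pow_succ, mul_comm ((p:ℤ)^k) _]
  exact mul_dvd_mul hsum h

/-- 1-dim congruence: `p^k ∣ a^(p^k) - a^(p^(k-1))`. -/
lemma one_dim (p : ℕ) (hp : p.Prime) (k : ℕ) (hk : 1 ≤ k) (a : ℤ) :
    (p:ℤ) ^ k ∣ a ^ p ^ k - a ^ p ^ (k - 1) := by
  have h := dvd_sub_pow_of_dvd_sub (a := a ^ p) (b := a) (p := p)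
    (by exact_mod_cast int_fermat p hp a) (k - 1)
  rw [← pow_mul, ← pow_succ'] at h
  have e1 : k - 1 + 1 = k := by omega
  rw [e1] at h
  exact_mod_cast h

lemma eval_congr (m : ℕ) [NeZero m] (g : MvPolynomial (Fin 2) ℤ) (s s' t t' : ℤ)
    (hs : (m:ℤ) ∣ s - s') (ht : (m:ℤ) ∣ t - t') :
    (m:ℤ) ∣ MvPolynomial.eval ![s, t] g - MvPolynomial.eval ![s', t'] g := by
  rw [← ZMod.intCast_zmod_eq_zero_iff_dvd]
  push_cast
  rw [sub_eq_zero]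
  have key : ∀ (u v : ℤ), ((MvPolynomial.eval ![u, v] g : ℤ) : ZMod m) =
      MvPolynomial.eval₂ (Int.castRingHom (ZMod m)) ![(u : ZMod m), (v : ZMod m)] g := by
    intro u v
    have h := MvPolynomial.eval₂_comp_left (Int.castRingHom (ZMod m))
      (RingHom.id ℤ) ![u, v] g
    rw [MvPolynomial.eval₂_id, RingHom.comp_id] at h
    have hv : (⇑(Int.castRingHom (ZMod m)) ∘ ![u, v]) = ![(u:ZMod m), (v:ZMod m)] := by
      funext i; fin_cases i <;> simp
    rw [hv] at h
    exact h
  rw [key, key]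
  have hseq : ((s : ZMod m)) = ((s' : ZMod m)) := by
    have : ((s - s' : ℤ) : ZMod m) = 0 := (ZMod.intCast_zmod_eq_zero_iff_dvd _ m).mpr hs
    push_cast at this; linear_combination this
  have hteq : ((t : ZMod m)) = ((t' : ZMod m)) := by
    have : ((t - t' : ℤ) : ZMod m) = 0 := (ZMod.intCast_zmod_eq_zero_iff_dvd _ m).mpr ht
    push_cast at this; linear_combination this
  rw [hseq, hteq]


theorem stmt_13 (P Q : ℤ) (hP : P ≠ 0) (hQ : Q ≠ 0) (hD : P ^ 2 - 4 * Q ≠ 0)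
    (p : ℕ) (hp : p.Prime) (k n : ℕ) (hk : 1 ≤ k) (hn : 1 ≤ n) :
    (p : ℤ) ^ k ∣ lucasV P Q (p ^ k * n) - lucasV P Q (p ^ (k - 1) * n) := by
  obtain ⟨G, hG⟩ := vpoly_sub_pow p hp
  -- step identity : V (p^(j+1) n) = (V (p^j n))^p + p * eval ![V (p^j n), Q^(p^j n)] G
  have hstep : ∀ (j m : ℕ), lucasV P Q (p ^ (j+1) * m)
      = (lucasV P Q (p ^ j * m)) ^ p
        + (p:ℤ) * MvPolynomial.eval ![lucasV P Q (p ^ j * m), Q ^ (p ^ j * m)] G := by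
    intro j m
    have h1 : lucasV P Q (p ^ (j+1) * m) = lucasV (lucasV P Q (p ^ j * m)) (Q ^ (p ^ j * m)) p := by
      rw [show p ^ (j+1) * m = (p ^ j * m) * p by ring]
      exact lucasV_mul P Q (p ^ j * m) p
    rw [h1, ← eval_vpoly, hG]
    simp [mul_comm]
  obtain ⟨k', rfl⟩ : ∃ k', k = k' + 1 := ⟨k - 1, by omega⟩
  simp only [Nat.add_sub_cancel]
  clear hk hn
  induction k' generalizing n with
  | zero =>
      simp only [pow_one, pow_zero, one_mul]
      rw [hstep 0 n]
      simp only [pow_zero, one_mul]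
      obtain ⟨c, hc⟩ := int_fermat p hp (lucasV P Q n)
      exact ⟨c + MvPolynomial.eval ![lucasV P Q n, Q ^ n] G, by linear_combination hc⟩
  | succ k' ih =>
      haveI : NeZero (p ^ (k' + 1)) := ⟨pow_ne_zero _ hp.ne_zero⟩
      have ihn := ih n
      have hq : (p:ℤ) ^ (k' + 1) ∣ Q ^ (p ^ (k'+1) * n) - Q ^ (p ^ k' * n) := by
        have := one_dim p hp (k' + 1) (by omega) (Q ^ n)
        simp only [Nat.add_sub_cancel, ← pow_mul] at this
        rw [show p ^ (k'+1) * n = n * p ^ (k'+1) by ring, show p ^ k' * n = n * p ^ k' by ring]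
        exact this
      rw [hstep k' n, hstep (k'+1) n]
      have h1 : (p:ℤ) ^ (k' + 2) ∣ (lucasV P Q (p ^ (k'+1) * n)) ^ p - (lucasV P Q (p ^ k' * n)) ^ p := by
        exact pow_lift p hp (k' + 1) (by omega) _ _ ihn
      have h2 : (p:ℤ) ^ (k' + 1) ∣
          MvPolynomial.eval ![lucasV P Q (p ^ (k'+1) * n), Q ^ (p ^ (k'+1) * n)] G
          - MvPolynomial.eval ![lucasV P Q (p ^ k' * n), Q ^ (p ^ k' * n)] G := by
        have := eval_congr (p ^ (k'+1)) G _ _ _ _ (by push_cast; exact ihn) (by push_cast; exact hq)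
        push_cast at this
        exact this
      obtain ⟨c1, hc1⟩ := h1
      obtain ⟨c2, hc2⟩ := h2
      refine ⟨c1 + c2, ?_⟩
      linear_combination hc1 + (p:ℤ) * hc2
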